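/- arXiv:2311.02430 — 5 statements merged into one kernel-verified Lean document; each statement's English description precedes it below -/
import Mathlib

section
/- Let G be a co-chordal graph (G^c is chordal) and let x_1 be a simplicial vertex of G^c. Define the graph G̃ on vertex set V(G) \ {x_1} whose edges are the edges of G \ x_1 together with all pairs {x_i, x_j} that are edges of G^c \ x_1 with N_{G^c}(x_1) ∩ {x_i, x_j} = ∅. Then G̃ is co-chordal, i.e., G̃^c is chordal. -/
/-!
In the complement of `G̃`, two vertices `u, v ≠ x₁` are adjacent exactly when they are adjacent
in `Gᶜ` and one of them lies in `Y = N_{Gᶜ}(x₁)`. As `x₁` is simplicial in `Gᶜ`, `Y` is a clique,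
so `G̃ᶜ` is a split graph: every edge meets the clique `Y`. Split graphs are chordal: if `i` lies
on an induced cycle of length at least 4 and in the clique, then `i + 2` does not, so the edges at
`i + 2` force the non-adjacent vertices `i + 1` and `i + 3` into the clique.
-/

/-- A graph is chordal if it has no induced cycle of length at least 4. -/
def SimpleGraph.IsChordal {V : Type*} (G : SimpleGraph V) : Prop :=
  ∀ n : ℕ, 4 ≤ n → IsEmpty (SimpleGraph.cycleGraph n ↪g G)

namespace SimpleGraph

section Cycle

open Fin.CommRing

variable {m : ℕ}

lemma cycleGraph_adj_add_one (i : Fin (m + 4)) : (cycleGraph (m + 4)).Adj i (i + 1) :=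
  cycleGraph_adj.mpr (.inr (add_sub_cancel_left i 1))

lemma cycleGraph_not_adj_add_two (i : Fin (m + 4)) : ¬ (cycleGraph (m + 4)).Adj i (i + 2) := by
  rw [cycleGraph_adj, add_sub_cancel_left, sub_add_cancel_left]
  simp [Fin.ext_iff, Fin.val_neg, Nat.mod_eq_of_lt (show 2 < m + 4 by omega)]

lemma add_two_ne_self (i : Fin (m + 4)) : i + 2 ≠ i := by
  simp [Fin.ext_iff, Nat.mod_eq_of_lt (show 2 < m + 4 by omega)]

lemma cycleGraph_not_isClique_of_forall_adj_mem {S : Set (Fin (m + 4))}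
    (hS : (cycleGraph (m + 4)).IsClique S)
    (hcover : ∀ i j, (cycleGraph (m + 4)).Adj i j → i ∈ S ∨ j ∈ S) : False := by
  have hstep (i : Fin (m + 4)) : i ∈ S ∨ i + 1 ∈ S := hcover _ _ (cycleGraph_adj_add_one i)
  have hgap (i : Fin (m + 4)) (hi : i ∈ S) : i + 2 ∉ S := fun h =>
    cycleGraph_not_adj_add_two i (hS hi h (add_two_ne_self i).symm)
  obtain ⟨i, hi⟩ : ∃ i, i ∈ S := (hstep 0).elim (⟨0, ·⟩) (⟨1, ·⟩)
  have h2 := hgap i hi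
  have h1 : i + 1 ∈ S := (hstep (i + 1)).resolve_right (by rwa [add_assoc, one_add_one_eq_two])
  have h3 : i + 1 + 2 ∈ S := by
    rw [add_right_comm]
    exact (hstep (i + 2)).resolve_left h2
  exact hgap _ h1 h3

end Cycle

variable {V : Type*}

theorem IsChordal.of_isClique_of_forall_adj_mem {H : SimpleGraph V} {Y : Set V}
    (hY : H.IsClique Y) (hcover : ∀ u v, H.Adj u v → u ∈ Y ∨ v ∈ Y) : H.IsChordal := by
  intro n hn
  obtain ⟨m, rfl⟩ : ∃ m, n = m + 4 := ⟨n - 4, by omega⟩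
  refine ⟨fun f => cycleGraph_not_isClique_of_forall_adj_mem (S := f ⁻¹' Y) ?_ ?_⟩
  · exact fun i hi j hj hij => f.map_rel_iff.mp (hY hi hj (f.injective.ne hij))
  · exact fun i j hij => hcover _ _ (f.map_rel_iff.mpr hij)

lemma compl_induce_fromRel_adj (G : SimpleGraph V) (Y s : Set V) (u v : s) :
    ((fromRel fun a b => G.Adj a b ∨ (Gᶜ.Adj a b ∧ a ∉ Y ∧ b ∉ Y)).induce s)ᶜ.Adj u v ↔
      Gᶜ.Adj u v ∧ ((u : V) ∈ Y ∨ (v : V) ∈ Y) := by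
  simp only [compl_adj, comap_adj, fromRel_adj, Function.Embedding.coe_subtype, ne_eq,
    Subtype.coe_injective.eq_iff, G.adj_comm (v : V)]
  tauto

end SimpleGraph

open SimpleGraph

theorem stmt8_general {V : Type*} (G : SimpleGraph V) (x₁ : V)
    (hsimp : ∀ u ∈ Gᶜ.neighborSet x₁, ∀ v ∈ Gᶜ.neighborSet x₁, u ≠ v → Gᶜ.Adj u v) :
    (((SimpleGraph.fromRel fun u v : V =>
        G.Adj u v ∨ (Gᶜ.Adj u v ∧ u ∉ Gᶜ.neighborSet x₁ ∧ v ∉ Gᶜ.neighborSet x₁)).induce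
      {v : V | v ≠ x₁})ᶜ).IsChordal := by
  refine IsChordal.of_isClique_of_forall_adj_mem (Y := {v | (v : V) ∈ Gᶜ.neighborSet x₁}) ?_ ?_
  · intro u hu v hv huv
    exact (compl_induce_fromRel_adj _ _ _ _ _).mpr
      ⟨hsimp _ hu _ hv (Subtype.coe_injective.ne huv), .inl hu⟩
  · exact fun u v h => ((compl_induce_fromRel_adj _ _ _ _ _).mp h).2

/-- Given a co-chordal graph `G` with `x₁` a simplicial vertex of `Gᶜ`, the graph
`G̃` on `V(G) \ {x₁}` whose edges are those of `G \ x₁` together with the edges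
`{u,v}` of `Gᶜ \ x₁` with `N_{Gᶜ}(x₁) ∩ {u,v} = ∅` is again co-chordal. -/
theorem stmt8 {V : Type*} [Fintype V] (G : SimpleGraph V) (x₁ : V)
    (hchord : Gᶜ.IsChordal)
    (hsimp : ∀ u ∈ Gᶜ.neighborSet x₁, ∀ v ∈ Gᶜ.neighborSet x₁, u ≠ v → Gᶜ.Adj u v) :
    (((SimpleGraph.fromRel fun u v : V =>
        G.Adj u v ∨ (Gᶜ.Adj u v ∧ u ∉ Gᶜ.neighborSet x₁ ∧ v ∉ Gᶜ.neighborSet x₁)).induce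
      {v : V | v ≠ x₁})ᶜ).IsChordal :=
  stmt8_general G x₁ hsimp
end

section
/- Let G be a co-chordal graph, let x_1 be a simplicial vertex of G^c, set Y = N_{G^c}(x_1) and W = N_G(x_1). For every (r+1)-subset S of V(G) \ {x_1} with G[S] connected, and every vertex y ∈ Y ∩ S, the induced subgraph G[(S \ {y}) ∪ {x_1}] is connected. Moreover, if Y ∩ S = ∅, then for every w ∈ W ∩ S, G[(S \ {w}) ∪ {x_1}] is connected. -/
namespace SimpleGraph

variable {V W : Type*} {G : SimpleGraph V}

lemma Connected.induce_image {H : SimpleGraph W} (f : G →g H) {s : Set V}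
    (h : (G.induce s).Connected) : (H.induce (f '' s)).Connected := by
  let g : G.induce s →g H.induce (f '' s) :=
    { toFun := fun v => ⟨f v, v, v.2, rfl⟩
      map_rel' := fun huv => f.map_rel huv }
  refine h.map g ?_
  rintro ⟨_, v, hv, rfl⟩
  exact ⟨⟨v, hv⟩, rfl⟩

lemma induce_insert_connected_of_forall_adj {s : Set V} {x : V} (h : ∀ v ∈ s, G.Adj x v) :
    (G.induce (insert x s)).Connected := by
  rw [connected_iff_exists_forall_reachable]
  refine ⟨⟨x, Set.mem_insert x s⟩, ?_⟩
  rintro ⟨v, rfl | hv⟩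
  · rfl
  · exact Adj.reachable (h v hv)

def homUpdate [DecidableEq V] {x y : V} (h : G.neighborSet y ⊆ G.neighborSet x) : G →g G where
  toFun := Function.update id y x
  map_rel' {u v} huv := by
    rcases eq_or_ne u y with rfl | hu <;> rcases eq_or_ne v u with rfl | hvu
    · exact (G.irrefl huv).elim
    · simpa [hvu] using h huv
    · exact (G.irrefl huv).elim
    · rcases eq_or_ne v y with rfl | hv
      · simpa [hu] using (h huv.symm).symm
      · simpa [hu, hv] using huv

lemma image_update_id [DecidableEq V] {s : Set V} {x y : V} (hy : y ∈ s) :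
    Function.update id y x '' s = insert x (s \ {y}) := by
  ext v
  constructor
  · rintro ⟨u, hu, rfl⟩
    rcases eq_or_ne u y with rfl | huy
    · simp
    · simp [hu, huy]
  · rintro (rfl | ⟨hv, hvy⟩)
    · exact ⟨y, hy, by simp⟩
    · exact ⟨v, hv, Function.update_of_ne hvy _ _⟩

lemma Connected.induce_insert_diff_singleton {s : Set V} {x y : V}
    (h : G.neighborSet y ⊆ G.neighborSet x) (hy : y ∈ s) (hs : (G.induce s).Connected) :
    (G.induce (insert x (s \ {y}))).Connected := by
  classical
  have himage : homUpdate h '' s = insert x (s \ {y}) := image_update_id hy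
  exact himage ▸ hs.induce_image (homUpdate h)

lemma neighborSet_subset_of_compl_adj {x y : V} (hx : Gᶜ.IsClique (Gᶜ.neighborSet x))
    (hy : Gᶜ.Adj x y) : G.neighborSet y ⊆ G.neighborSet x := by
  intro v hv
  by_contra hnadj
  have hne : x ≠ v := by
    rintro rfl
    exact hy.2 hv.symm
  have hyv : Gᶜ.Adj y v := hx hy ⟨hne, hnadj⟩ (G.ne_of_adj hv)
  exact hyv.2 hv

end SimpleGraph

theorem stmt9_general {V : Type*} (G : SimpleGraph V) (x₁ : V)
    (hsimp : ∀ u ∈ Gᶜ.neighborSet x₁, ∀ v ∈ Gᶜ.neighborSet x₁, u ≠ v → Gᶜ.Adj u v)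
    (S : Finset V) (hx : x₁ ∉ S)
    (hconn : (G.induce (S : Set V)).Connected) :
    (∀ y ∈ Gᶜ.neighborSet x₁, y ∈ S →
        (G.induce (insert x₁ ((S : Set V) \ {y}))).Connected) ∧
    ((∀ y ∈ Gᶜ.neighborSet x₁, y ∉ S) →
        ∀ w ∈ G.neighborSet x₁, w ∈ S →
          (G.induce (insert x₁ ((S : Set V) \ {w}))).Connected) := by
  refine ⟨fun y hy hyS => ?_, fun hY w _ _ => ?_⟩
  · exact hconn.induce_insert_diff_singleton
      (SimpleGraph.neighborSet_subset_of_compl_adj hsimp hy) hyS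
  · refine SimpleGraph.induce_insert_connected_of_forall_adj fun v hv => ?_
    have hxv : x₁ ≠ v := fun h => hx (h ▸ hv.1)
    by_contra hnadj
    exact hY v ⟨hxv, hnadj⟩ hv.1

/-- Let `G` be co-chordal, `x₁` a simplicial vertex of `Gᶜ`, `Y = N_{Gᶜ}(x₁)`,
`W = N_G(x₁)`.  For every `(r+1)`-subset `S ⊆ V(G) \ {x₁}` with `G[S]` connected:
for each `y ∈ Y ∩ S` the graph `G[(S \ {y}) ∪ {x₁}]` is connected, and if
`Y ∩ S = ∅` then for each `w ∈ W ∩ S` the graph `G[(S \ {w}) ∪ {x₁}]` is connected. -/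
theorem stmt9 {V : Type*} [Fintype V] (G : SimpleGraph V) (x₁ : V)
    (hchord : Gᶜ.IsChordal)
    (hsimp : ∀ u ∈ Gᶜ.neighborSet x₁, ∀ v ∈ Gᶜ.neighborSet x₁, u ≠ v → Gᶜ.Adj u v)
    (r : ℕ) (S : Finset V) (hx : x₁ ∉ S) (hcard : S.card = r + 1)
    (hconn : (G.induce (S : Set V)).Connected) :
    (∀ y ∈ Gᶜ.neighborSet x₁, y ∈ S →
        (G.induce (insert x₁ ((S : Set V) \ {y}))).Connected) ∧
    ((∀ y ∈ Gᶜ.neighborSet x₁, y ∉ S) →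
        ∀ w ∈ G.neighborSet x₁, w ∈ S →
          (G.induce (insert x₁ ((S : Set V) \ {w}))).Connected) :=
  stmt9_general G x₁ hsimp S hx hconn
end

section
/- Let G be a gap-free, claw-free finite simple graph containing a leaf (a vertex of degree one). Then V(G) can be partitioned as Y ⊔ W where G[Y] is a clique and W is an independent set in G; consequently both G and G^c are chordal. -/
/-- `G` is claw-free: no induced claw, i.e. no vertex `x` with three pairwise
non-adjacent neighbours. -/
def SimpleGraph.IsClawFree {V : Type*} (G : SimpleGraph V) : Prop :=
  ∀ x y₁ y₂ y₃ : V, y₁ ≠ y₂ → y₁ ≠ y₃ → y₂ ≠ y₃ →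
    G.Adj x y₁ → G.Adj x y₂ → G.Adj x y₃ →
    ¬ (¬ G.Adj y₁ y₂ ∧ ¬ G.Adj y₁ y₃ ∧ ¬ G.Adj y₂ y₃)

open Fin.CommRing in
theorem Fin.sub_one_ne_add_one {n : ℕ} (i : Fin (n + 3)) : i - 1 ≠ i + 1 := by
  intro h
  have h2 : (2 : Fin (n + 3)) = 0 := by linear_combination -h
  simp [Fin.ext_iff, Nat.mod_eq_of_lt (show 2 < n + 3 by omega)] at h2

namespace SimpleGraph

variable {V : Type*} {G : SimpleGraph V}

section Cycle

open Fin.CommRing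

variable {n : ℕ} (i : Fin (n + 4))

theorem cycleGraph_adj_sub_one_self : (cycleGraph (n + 4)).Adj (i - 1) i :=
  Or.inr (sub_sub_cancel i 1)

theorem cycleGraph_adj_self_add_one : (cycleGraph (n + 4)).Adj i (i + 1) :=
  Or.inr (add_sub_cancel_left i 1)

theorem cycleGraph_not_adj_sub_one_add_one : ¬(cycleGraph (n + 4)).Adj (i - 1) (i + 1) := by
  rintro (h | h)
  · have h3 : (3 : Fin (n + 4)) = 0 := by linear_combination -h
    simp [Fin.ext_iff, Nat.mod_eq_of_lt (show 3 < n + 4 by omega)] at h3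
  · have h1 : (1 : Fin (n + 4)) = 0 := by linear_combination h
    simp at h1

end Cycle

theorem mem_of_isClique_of_isIndepSet_compl {s : Set V} (hs : G.IsClique s)
    (hsc : G.IsIndepSet sᶜ) {a b c : V} (hab : G.Adj a b) (hbc : G.Adj b c)
    (hac : ¬G.Adj a c) (hne : a ≠ c) : b ∈ s := by
  by_contra hb
  have ha : a ∈ s := by_contra fun ha => hsc ha hb hab.ne hab
  have hc : c ∈ s := by_contra fun hc => hsc hb hc hbc.ne hbc
  exact hac (hs ha hc hne)

theorem isChordal_of_isClique_of_isIndepSet_compl {s : Set V} (hs : G.IsClique s)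
    (hsc : G.IsIndepSet sᶜ) : G.IsChordal := by
  intro n hn
  obtain ⟨m, rfl⟩ : ∃ m, n = m + 4 := ⟨n - 4, by omega⟩
  refine ⟨fun f => ?_⟩
  have hmem (i : Fin (m + 4)) : f i ∈ s :=
    mem_of_isClique_of_isIndepSet_compl hs hsc (f.map_adj_iff.2 (cycleGraph_adj_sub_one_self i))
      (f.map_adj_iff.2 (cycleGraph_adj_self_add_one i))
      (f.map_adj_iff.not.2 (cycleGraph_not_adj_sub_one_add_one i))
      (f.injective.ne (Fin.sub_one_ne_add_one i))
  exact cycleGraph_not_adj_sub_one_add_one 0 <| f.map_adj_iff.1 <|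
    hs (hmem _) (hmem _) (f.injective.ne (Fin.sub_one_ne_add_one 0))

theorem nonempty_cycleGraph_four_embedding {a b c d : V} (hab : G.Adj a b) (hbc : G.Adj b c)
    (hcd : G.Adj c d) (hda : G.Adj d a) (hac : ¬G.Adj a c) (hbd : ¬G.Adj b d) (hne_ac : a ≠ c)
    (hne_bd : b ≠ d) : Nonempty (cycleGraph 4 ↪g G) := by
  have := hab.ne; have := hbc.ne; have := hcd.ne; have := hda.ne
  have hinj : Function.Injective ![a, b, c, d] := by
    intro i j h
    fin_cases i <;> fin_cases j <;> simp_all [eq_comm]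
  have hadj (i j : Fin 4) :
      G.Adj (![a, b, c, d] i) (![a, b, c, d] j) ↔ (cycleGraph 4).Adj i j := by
    fin_cases i <;> fin_cases j <;> simp +decide [G.adj_comm, hda.symm, *]
  exact ⟨⟨⟨_, hinj⟩, hadj _ _⟩⟩

section Leaf

variable {x y : V} (hx : G.neighborSet x = {y})
include hx

theorem IsClawFree.isClique_insert_neighborSet_diff (hclaw : G.IsClawFree) :
    G.IsClique (insert y (G.neighborSet y \ {x})) := by
  have hleaf {v : V} : G.Adj x v ↔ v = y := Set.ext_iff.1 hx v
  have hxy : G.Adj x y := hleaf.2 rfl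
  have hnx {v : V} (hv : G.Adj y v) : ¬G.Adj x v := fun h => hv.ne (hleaf.1 h).symm
  refine IsClique.insert (fun u ⟨hu, hux⟩ v ⟨hv, hvx⟩ huv => ?_) fun _ hv _ => hv.1
  by_contra huv'
  exact hclaw y x u v (Ne.symm hux) (Ne.symm hvx) huv hxy.symm hu hv ⟨hnx hu, hnx hv, huv'⟩

theorem isIndepSet_compl_insert_neighborSet_diff (hgap : IsEmpty (cycleGraph 4 ↪g Gᶜ)) :
    G.IsIndepSet (insert y (G.neighborSet y \ {x}))ᶜ := by
  have hleaf {v : V} : G.Adj x v ↔ v = y := Set.ext_iff.1 hx v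
  have hxy : G.Adj x y := hleaf.2 rfl
  intro u hu v hv huv hadj
  simp only [Set.mem_compl_iff, Set.mem_insert_iff, Set.mem_sdiff, mem_neighborSet,
    Set.mem_singleton_iff, not_or, not_and_not_right] at hu hv
  obtain rfl | hux := eq_or_ne u x
  · exact hv.1 (hleaf.1 hadj)
  obtain rfl | hvx := eq_or_ne v x
  · exact hu.1 (hleaf.1 hadj.symm)
  have hyu : ¬G.Adj y u := mt hu.2 hux
  have hyv : ¬G.Adj y v := mt hv.2 hvx
  exact hgap.elim (nonempty_cycleGraph_four_embedding (G := Gᶜ) ⟨hux.symm, mt hleaf.1 hu.1⟩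
    ⟨hu.1, fun h => hyu h.symm⟩ ⟨Ne.symm hv.1, hyv⟩ ⟨hvx, fun h => hv.1 (hleaf.1 h.symm)⟩
    (fun h => h.2 hxy) (fun h => h.2 hadj) hxy.ne huv).some

end Leaf

end SimpleGraph

open SimpleGraph

theorem stmt11_general {V : Type*} (G : SimpleGraph V)
    (hgap : IsEmpty (SimpleGraph.cycleGraph 4 ↪g Gᶜ))
    (hclaw : G.IsClawFree)
    (hleaf : ∃ x : V, (G.neighborSet x).ncard = 1) :
    (∃ Y W : Set V, Y ∪ W = Set.univ ∧ Disjoint Y W ∧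
        (∀ u ∈ Y, ∀ v ∈ Y, u ≠ v → G.Adj u v) ∧
        (∀ u ∈ W, ∀ v ∈ W, ¬ G.Adj u v)) ∧
      G.IsChordal ∧ Gᶜ.IsChordal := by
  obtain ⟨x, hdeg⟩ := hleaf
  obtain ⟨y, hx⟩ := Set.ncard_eq_one.mp hdeg
  set Y := insert y (G.neighborSet y \ {x})
  have hY : G.IsClique Y := hclaw.isClique_insert_neighborSet_diff hx
  have hYc : G.IsIndepSet Yᶜ := isIndepSet_compl_insert_neighborSet_diff hx hgap
  refine ⟨⟨Y, Yᶜ, Y.union_compl_self, disjoint_compl_right, hY,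
    fun u hu v hv huv => hYc hu hv huv.ne huv⟩, isChordal_of_isClique_of_isIndepSet_compl hY hYc,
    isChordal_of_isClique_of_isIndepSet_compl ((isClique_compl G).2 hYc)
      (by rwa [compl_compl, isIndepSet_compl])⟩

/-- A gap-free, claw-free graph with a leaf has a vertex partition `Y ⊔ W` with
`G[Y]` a clique and `W` independent; consequently both `G` and `Gᶜ` are chordal. -/
theorem stmt11 {V : Type*} [Fintype V] (G : SimpleGraph V)
    (hgap : IsEmpty (SimpleGraph.cycleGraph 4 ↪g Gᶜ))
    (hclaw : G.IsClawFree)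
    (hleaf : ∃ x : V, (G.neighborSet x).ncard = 1) :
    (∃ Y W : Set V, Y ∪ W = Set.univ ∧ Disjoint Y W ∧
        (∀ u ∈ Y, ∀ v ∈ Y, u ≠ v → G.Adj u v) ∧
        (∀ u ∈ W, ∀ v ∈ W, ¬ G.Adj u v)) ∧
      G.IsChordal ∧ Gᶜ.IsChordal :=
  stmt11_general G hgap hclaw hleaf
end

section
/- Let G be a finite simple graph whose complement G^c is chordal, let r ≥ 2, and let F ⊆ V(G) with |F| = r such that G[F] is connected. Then F is contained in a unique facet (maximal face) of the r-independence complex Ind_r(G). -/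
/-- A set `W` of vertices is `r`-independent in `G` if every connected component
of the induced subgraph `G[W]` has at most `r` vertices. -/
def SimpleGraph.IsRIndepSet {V : Type*} (G : SimpleGraph V) (r : ℕ) (W : Set V) : Prop :=
  ∀ c : (G.induce W).ConnectedComponent, c.supp.ncard ≤ r

/-!
Let `M` be `F` together with all vertices that have no neighbour in `F`. An `r`-independent set
containing `F` cannot contain a neighbour `v ∉ F` of `F`, since `F ∪ {v}` would induce a
connected graph on `r + 1` vertices; so every such set lies in `M`. Conversely `M` is
`r`-independent: `F` contains an edge `ab` (as `r ≥ 2`), and an edge `vw` between non-neighbours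
of `F` would make `a v b w` an induced 4-cycle of `Gᶜ`. Hence the non-neighbours are isolated in
`G[M]`, the other components lie inside `F`, and `M` is the unique facet through `F`.
-/

namespace SimpleGraph

variable {V : Type*} {G H : SimpleGraph V} {r : ℕ}

theorem IsChordal.adj_or_adj_of_square (hH : H.IsChordal) {a b x y : V}
    (hax : H.Adj a x) (hxb : H.Adj x b) (hby : H.Adj b y) (hya : H.Adj y a)
    (hab : a ≠ b) (hxy : x ≠ y) : H.Adj a b ∨ H.Adj x y := by
  by_contra! ⟨hnab, hnxy⟩
  have := hax.ne; have := hxb.ne; have := hby.ne; have := hya.ne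
  refine (hH 4 le_rfl).elim' ⟨⟨![a, x, b, y], fun u v huv => ?_⟩, fun {u v} => ?_⟩
  · fin_cases u <;> fin_cases v <;> simp_all [eq_comm]
  · change H.Adj (![a, x, b, y] u) (![a, x, b, y] v) ↔ _
    fin_cases u <;> fin_cases v <;> simp_all [cycleGraph_adj, adj_comm] <;> decide

theorem exists_adj_of_connected_induce {F : Finset V} (hF : (G.induce (F : Set V)).Connected)
    (hcard : 1 < F.card) : ∃ a ∈ F, ∃ b ∈ F, G.Adj a b := by
  have : Nontrivial (F : Set V) :=
    Set.nontrivial_coe_sort.mpr (Finset.one_lt_card_iff_nontrivial.mp hcard)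
  obtain ⟨⟨a, ha⟩⟩ := hF.nonempty
  obtain ⟨⟨b, hb⟩, hab⟩ := hF.preconnected.exists_adj_of_nontrivial ⟨a, ha⟩
  exact ⟨a, ha, b, hb, hab⟩

theorem IsRIndepSet.ncard_le_of_connected [Finite V] {W S : Set V} (hW : G.IsRIndepSet r W)
    (hSW : S ⊆ W) (hS : (G.induce S).Connected) : S.ncard ≤ r := by
  obtain ⟨⟨s, hs⟩⟩ := hS.nonempty
  let c := (G.induce W).connectedComponentMk ⟨s, hSW hs⟩
  have hSc : S ⊆ Subtype.val '' c.supp := fun t ht =>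
    ⟨⟨t, hSW ht⟩, ConnectedComponent.eq.mpr
      ((hS.preconnected ⟨t, ht⟩ ⟨s, hs⟩).map (G.induceHomOfLE hSW).toHom), rfl⟩
  calc S.ncard ≤ (Subtype.val '' c.supp).ncard := Set.ncard_le_ncard hSc
    _ = c.supp.ncard := Set.ncard_image_of_injective _ Subtype.val_injective
    _ ≤ r := hW c

theorem IsRIndepSet.mem_of_adj [Finite V] {W : Set V} {F : Finset V} (hW : G.IsRIndepSet r W)
    (hFW : ↑F ⊆ W) (hcard : F.card = r) (hF : (G.induce (F : Set V)).Connected) {v f : V}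
    (hv : v ∈ W) (hf : f ∈ F) (hvf : G.Adj v f) : v ∈ F := by
  by_contra hvF
  have hconn : (G.induce ({v, f} ∪ F : Set V)).Connected :=
    induce_union_connected (induce_pair_connected_of_adj hvf).preconnected hF.preconnected
      ⟨f, by simp, hf⟩
  have hle := hW.ncard_le_of_connected (by simp [Set.insert_subset_iff, hv, hFW hf, hFW]) hconn
  rw [Set.insert_union, Set.singleton_union, Set.insert_eq_of_mem (Finset.mem_coe.mpr hf),
    Set.ncard_insert_of_notMem hvF, Set.ncard_coe_finset] at hle
  omega

theorem isRIndepSet_of_not_adj_outside {W : Set V} {F : Finset V} (hF : F.card ≤ r) (hr : 1 ≤ r)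
    (hW : ∀ v ∈ W, v ∉ F → ∀ w ∈ W, ¬ G.Adj v w) : G.IsRIndepSet r W := by
  intro c
  by_cases hc : ∃ u ∈ c.supp, u.1 ∉ F
  · obtain ⟨u, hu, huF⟩ := hc
    have hsub : c.supp ⊆ {u} := fun w hw => by
      obtain ⟨p⟩ := ConnectedComponent.exact (hu.trans hw.symm)
      by_contra hne
      exact hW u u.2 huF p.snd p.snd.2 (p.adj_snd (p.not_nil_of_ne (Ne.symm hne)))
    calc c.supp.ncard ≤ ({u} : Set _).ncard := Set.ncard_le_ncard hsub
      _ ≤ r := by rwa [Set.ncard_singleton]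
  · push Not at hc
    have hsub : Subtype.val '' c.supp ⊆ F := by
      rintro _ ⟨u, hu, rfl⟩
      exact hc u hu
    calc c.supp.ncard = (Subtype.val '' c.supp).ncard :=
          (Set.ncard_image_of_injective _ Subtype.val_injective).symm
      _ ≤ (F : Set V).ncard := Set.ncard_le_ncard hsub F.finite_toSet
      _ ≤ r := by rwa [Set.ncard_coe_finset]

variable [Fintype V] [DecidableRel G.Adj] [DecidableEq V]

variable (G) in
def extendByNonNeighbors (F : Finset V) : Finset V :=
  F ∪ ({v | ∀ f ∈ F, ¬ G.Adj v f} : Finset V)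

theorem mem_extendByNonNeighbors {F : Finset V} {v : V} :
    v ∈ G.extendByNonNeighbors F ↔ v ∈ F ∨ ∀ f ∈ F, ¬ G.Adj v f := by
  simp [extendByNonNeighbors]

theorem self_subset_extendByNonNeighbors (F : Finset V) : F ⊆ G.extendByNonNeighbors F :=
  Finset.subset_union_left

theorem IsRIndepSet.subset_extendByNonNeighbors {W : Set V} {F : Finset V}
    (hW : G.IsRIndepSet r W) (hFW : ↑F ⊆ W) (hcard : F.card = r)
    (hF : (G.induce (F : Set V)).Connected) : W ⊆ G.extendByNonNeighbors F := fun v hv =>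
  mem_extendByNonNeighbors.mpr <| or_iff_not_imp_right.mpr fun h => by
    push Not at h
    obtain ⟨f, hf, hvf⟩ := h
    exact hW.mem_of_adj hFW hcard hF hv hf hvf

theorem isRIndepSet_extendByNonNeighbors (hchord : Gᶜ.IsChordal) {F : Finset V} {a b : V}
    (ha : a ∈ F) (hb : b ∈ F) (hab : G.Adj a b) (hcard : F.card ≤ r) :
    G.IsRIndepSet r (G.extendByNonNeighbors F) := by
  have hr : 2 ≤ r := (Finset.one_lt_card.mpr ⟨a, ha, b, hb, hab.ne⟩).trans_le hcard
  refine isRIndepSet_of_not_adj_outside hcard (by omega) fun v hv hvF w hw hvw => ?_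
  have hvF' : ∀ f ∈ F, ¬ G.Adj v f := (mem_extendByNonNeighbors.mp hv).resolve_left hvF
  have hwF : w ∉ F := fun h => hvF' w h hvw
  have hwF' : ∀ f ∈ F, ¬ G.Adj w f := (mem_extendByNonNeighbors.mp hw).resolve_left hwF
  have hcompl : ∀ u ∉ F, (∀ f ∈ F, ¬ G.Adj u f) → ∀ f ∈ F, Gᶜ.Adj f u :=
    fun u huF hu f hf => ⟨fun h => huF (h ▸ hf), fun h => hu f hf h.symm⟩
  -- otherwise `a, v, b, w` would span an induced 4-cycle of `Gᶜ`
  obtain hab' | hvw' := hchord.adj_or_adj_of_square (hcompl v hvF hvF' a ha)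
    (hcompl v hvF hvF' b hb).symm (hcompl w hwF hwF' b hb) (hcompl w hwF hwF' a ha).symm
    hab.ne hvw.ne
  · exact hab'.2 hab
  · exact hvw'.2 hvw

end SimpleGraph

/-- If `Gᶜ` is chordal, `r ≥ 2`, and `F ⊆ V(G)` has `|F| = r` with `G[F]` connected,
then `F` is contained in a unique facet (inclusion-maximal face) of `Ind_r(G)`. -/
theorem stmt13 {V : Type*} [Fintype V] (G : SimpleGraph V)
    (hchord : Gᶜ.IsChordal) (r : ℕ) (hr : 2 ≤ r)
    (F : Finset V) (hcard : F.card = r)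
    (hconn : (G.induce (F : Set V)).Connected) :
    ∃! M : Finset V, G.IsRIndepSet r (M : Set V) ∧
      (∀ M' : Finset V, G.IsRIndepSet r (M' : Set V) → M ⊆ M' → M' = M) ∧
      F ⊆ M := by
  classical
  obtain ⟨a, ha, b, hb, hab⟩ := SimpleGraph.exists_adj_of_connected_induce hconn (by omega)
  have hM := SimpleGraph.isRIndepSet_extendByNonNeighbors hchord ha hb hab hcard.le
  have hsub (W : Finset V) (hW : G.IsRIndepSet r W) (hFW : F ⊆ W) :
      W ⊆ G.extendByNonNeighbors F :=
    Finset.coe_subset.mp (hW.subset_extendByNonNeighbors (Finset.coe_subset.mpr hFW) hcard hconn)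
  have hFM := SimpleGraph.self_subset_extendByNonNeighbors (G := G) F
  refine ⟨G.extendByNonNeighbors F, ⟨hM, fun M' hM' hMM' => ?_, hFM⟩,
    fun M' ⟨hM', hmax, hFM'⟩ => ?_⟩
  · exact (hsub M' hM' (hFM.trans hMM')).antisymm hMM'
  · exact (hmax _ hM (hsub M' hM' hFM')).symm
end

section
/- Let G be a finite simple graph whose complement G^c is chordal, let r ≥ 2, and let F, F' ⊆ V(G) with |F| = |F'| = r, F ≠ F', and both G[F] and G[F'] connected. If F_1 and F_1' are the unique facets of Ind_r(G) containing F and F' respectively, then F_1 ≠ F_1'. -/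
/-!
Two distinct connected `r`-subsets `F`, `F'` of an `r`-independent set `W` are whole
components of `G[W]`, so they are disjoint and no edge of `G` joins them. Picking an edge
`uv` of `G[F]` and an edge `u'v'` of `G[F']` (possible as `r ≥ 2`), the vertices
`u, u', v, v'` then form an induced `4`-cycle in `Gᶜ`, contradicting chordality.
-/

namespace SimpleGraph

variable {V : Type*} {G : SimpleGraph V}

theorem IsChordal.adj_or_adj_of_cycle {H : SimpleGraph V} (hH : H.IsChordal) {a b c d : V}
    (hab : H.Adj a b) (hbc : H.Adj b c) (hcd : H.Adj c d) (hda : H.Adj d a)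
    (hac : a ≠ c) (hbd : b ≠ d) : H.Adj a c ∨ H.Adj b d := by
  by_contra! ⟨hac', hbd'⟩
  refine (hH 4 le_rfl).false ⟨⟨![a, b, c, d], fun i j h => ?_⟩, fun {i j} => ?_⟩
  · fin_cases i <;> fin_cases j <;> simp_all [hab.ne, hcd.ne, hda.ne.symm, hbc.ne]
  · change H.Adj (![a, b, c, d] i) (![a, b, c, d] j) ↔ (cycleGraph 4).Adj i j
    fin_cases i <;> fin_cases j <;> simp_all [cycleGraph_adj, H.adj_comm] <;> decide

theorem Connected.exists_adj_of_one_lt_card {F : Finset V}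
    (hconn : (G.induce (F : Set V)).Connected) (hF : 1 < F.card) :
    ∃ u ∈ F, ∃ v ∈ F, G.Adj u v := by
  have : Nontrivial (F : Set V) :=
    Set.nontrivial_coe_sort.mpr (Finset.one_lt_card_iff_nontrivial.mp hF)
  obtain ⟨⟨u, hu⟩⟩ := hconn.nonempty
  obtain ⟨⟨v, hv⟩, huv⟩ := hconn.preconnected.exists_adj_of_nontrivial ⟨u, hu⟩
  exact ⟨u, hu, v, hv, huv⟩

theorem Connected.reachable_induce_of_subset {F W : Set V} (hconn : (G.induce F).Connected)
    (hFW : F ⊆ W) {x y : W} (hx : ↑x ∈ F) (hy : ↑y ∈ F) : (G.induce W).Reachable x y :=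
  (hconn ⟨x, hx⟩ ⟨y, hy⟩).map (G.induceHomOfLE hFW).toHom

theorem IsRIndepSet.mem_of_reachable {r : ℕ} {W F : Finset V} (hW : G.IsRIndepSet r W)
    (hFW : F ⊆ W) (hF : r ≤ F.card) (hconn : (G.induce (F : Set V)).Connected)
    {x y : (W : Set V)} (hx : ↑x ∈ F) (hxy : (G.induce W).Reachable x y) : ↑y ∈ F := by
  set S : Set (W : Set V) := Subtype.val ⁻¹' F
  have hS : S ⊆ ((G.induce W).connectedComponentMk x).supp := fun z hz =>
    ConnectedComponent.sound (hconn.reachable_induce_of_subset (by exact_mod_cast hFW) hz hx)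
  have hS_ncard : S.ncard = F.card := by
    rw [Set.ncard_preimage_of_injective_subset_range Subtype.val_injective (by simpa using hFW),
      Set.ncard_coe_finset]
  have hS_eq := Set.eq_of_subset_of_ncard_le hS ((hW _).trans (hS_ncard ▸ hF))
  change y ∈ S
  rw [hS_eq]
  exact ConnectedComponent.sound hxy.symm

theorem IsRIndepSet.compl_adj_of_ne {r : ℕ} {W F F' : Finset V} (hW : G.IsRIndepSet r W)
    (hFW : F ⊆ W) (hF'W : F' ⊆ W) (hcard : F.card = r) (hcard' : F'.card = r)
    (hconn : (G.induce (F : Set V)).Connected) (hconn' : (G.induce (F' : Set V)).Connected)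
    (hne : F ≠ F') {a b : V} (ha : a ∈ F) (hb : b ∈ F') : Gᶜ.Adj a b := by
  let a' : (W : Set V) := ⟨a, hFW ha⟩
  let b' : (W : Set V) := ⟨b, hF'W hb⟩
  have hFF' : (G.induce W).Reachable a' b' → F = F' := fun hab => by
    have hbF : b ∈ F := hW.mem_of_reachable hFW hcard.ge hconn ha hab
    have hF'F : F' ⊆ F := fun c hc => hW.mem_of_reachable hFW hcard.ge hconn (x := b')
      (y := ⟨c, hF'W hc⟩) hbF (hconn'.reachable_induce_of_subset (by exact_mod_cast hF'W) hb hc)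
    exact (Finset.eq_of_subset_of_card_le hF'F (by omega)).symm
  refine ⟨fun hab => hne (hFF' ?_), fun hab => hne (hFF' (Adj.reachable ?_))⟩
  · subst hab; rfl
  · simpa [a', b'] using hab

end SimpleGraph

theorem stmt14_general {V : Type*} (G : SimpleGraph V)
    (hchord : Gᶜ.IsChordal) (r : ℕ) (hr : 2 ≤ r)
    (F F' : Finset V) (hFF' : F ≠ F')
    (hcard : F.card = r) (hcard' : F'.card = r)
    (hconn : (G.induce (F : Set V)).Connected)
    (hconn' : (G.induce (F' : Set V)).Connected)
    (F₁ F₁' : Finset V)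
    (hF₁ : G.IsRIndepSet r (F₁ : Set V))
    (hsub : F ⊆ F₁) (hsub' : F' ⊆ F₁') :
    F₁ ≠ F₁' := by
  rintro rfl
  have hcompl : ∀ a ∈ F, ∀ b ∈ F', Gᶜ.Adj a b := fun a ha b hb =>
    hF₁.compl_adj_of_ne hsub hsub' hcard hcard' hconn hconn' hFF' ha hb
  obtain ⟨u, hu, v, hv, huv⟩ := hconn.exists_adj_of_one_lt_card (by omega)
  obtain ⟨u', hu', v', hv', huv'⟩ := hconn'.exists_adj_of_one_lt_card (by omega)
  rcases hchord.adj_or_adj_of_cycle (hcompl u hu u' hu') (hcompl v hv u' hu').symm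
    (hcompl v hv v' hv') (hcompl u hu v' hv').symm huv.ne huv'.ne with h | h
  exacts [h.2 huv, h.2 huv']

/-- If `Gᶜ` is chordal, `r ≥ 2`, `F ≠ F'` are `r`-sets with `G[F]`, `G[F']`
connected, and `F₁`, `F₁'` are facets of `Ind_r(G)` containing `F`, `F'`
respectively, then `F₁ ≠ F₁'`. -/
theorem stmt14 {V : Type*} [Fintype V] (G : SimpleGraph V)
    (hchord : Gᶜ.IsChordal) (r : ℕ) (hr : 2 ≤ r)
    (F F' : Finset V) (hFF' : F ≠ F')
    (hcard : F.card = r) (hcard' : F'.card = r)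
    (hconn : (G.induce (F : Set V)).Connected)
    (hconn' : (G.induce (F' : Set V)).Connected)
    (F₁ F₁' : Finset V)
    (hF₁ : G.IsRIndepSet r (F₁ : Set V))
    (hF₁max : ∀ M' : Finset V, G.IsRIndepSet r (M' : Set V) → F₁ ⊆ M' → M' = F₁)
    (hF₁' : G.IsRIndepSet r (F₁' : Set V))
    (hF₁'max : ∀ M' : Finset V, G.IsRIndepSet r (M' : Set V) → F₁' ⊆ M' → M' = F₁')
    (hsub : F ⊆ F₁) (hsub' : F' ⊆ F₁') :
    F₁ ≠ F₁' :=
  stmt14_general G hchord r hr F F' hFF' hcard hcard' hconn hconn' F₁ F₁' hF₁ hsub hsub'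
end
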